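/- Let R be a finite irreducible root system with highest root θ, α a long simple root, and y_α the minimal-length element with y_α(α) = θ. If β₁ + β₂ = θ with β₁, β₂ ∈ R⁺, then exactly one of β₁, β₂ belongs to N(y_α). -/

import Mathlib

open scoped RealInnerProductSpace

/-- Geometric data of a (finite or affine) root system with a choice of
positive and simple roots, inside a real inner product space. -/
structure RootSystemData (V : Type*) [NormedAddCommGroup V] [InnerProductSpace ℝ V] where
  roots : Set V
  pos : Set V
  simples : Set V
  simples_sub : simples ⊆ pos
  pos_sub : pos ⊆ roots
  ne_zero : ∀ α ∈ roots, α ≠ (0 : V)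
  eq_union : roots = pos ∪ (Neg.neg '' pos)
  not_both : ∀ α ∈ pos, -α ∉ pos

namespace RootSystemData

variable {V : Type*} [NormedAddCommGroup V] [InnerProductSpace ℝ V]
  [FiniteDimensional ℝ V]

/-- The orthogonal reflection in the hyperplane orthogonal to `α`. -/
noncomputable def srefl (α : V) : V ≃ₗᵢ[ℝ] V := Submodule.reflection (ℝ ∙ α)ᗮ

variable (R : RootSystemData V)

/-- The root system data is geometric: simple reflections permute the
positive roots other than the corresponding simple root, and the set of
roots is stable under all reflections in roots. -/
structure IsGeometric : Prop where
  simple_perm : ∀ α ∈ R.simples, ∀ β ∈ R.pos, β ≠ α → srefl α β ∈ R.pos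
  refl_stable : ∀ α ∈ R.roots, ∀ β ∈ R.roots, srefl α β ∈ R.roots
  pos_comb : ∀ α ∈ R.pos, α ∈ AddSubmonoid.closure R.simples

/-- The Weyl group: the group generated by the simple reflections. -/
noncomputable def W : Subgroup (V ≃ₗᵢ[ℝ] V) :=
  Subgroup.closure {g | ∃ α ∈ R.simples, g = srefl α}

/-- The inversion set `N(w) = {α ∈ Δ⁺ ∣ w⁻¹ α ∈ -Δ⁺}`. -/
def N (w : V ≃ₗᵢ[ℝ] V) : Set V := {α | α ∈ R.pos ∧ w⁻¹ α ∈ Neg.neg '' R.pos}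

/-- `l` is a word in the simple reflections representing `w`. -/
noncomputable def IsWord (l : List V) (w : V ≃ₗᵢ[ℝ] V) : Prop :=
  (∀ α ∈ l, α ∈ R.simples) ∧ w = (l.map srefl).prod

/-- The length of `w` : the least length of a word in the simple reflections
representing `w`. -/
noncomputable def length (w : V ≃ₗᵢ[ℝ] V) : ℕ :=
  sInf {n | ∃ l : List V, R.IsWord l w ∧ l.length = n}

/-- A reduced expression. -/
noncomputable def IsReduced (l : List V) (w : V ≃ₗᵢ[ℝ] V) : Prop :=
  R.IsWord l w ∧ l.length = R.length w

/-- The (left) weak Bruhat order: some reduced expression of `w₁` is an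
initial segment of a reduced expression of `w₂`. -/
noncomputable def weakLE (w₁ w₂ : V ≃ₗᵢ[ℝ] V) : Prop :=
  ∃ l₁ l₂ : List V, R.IsReduced l₁ w₁ ∧ R.IsReduced (l₁ ++ l₂) w₂

end RootSystemData

/-!
Write `uᵢ = y⁻¹ βᵢ`. These are roots with `u₁ + u₂ = y⁻¹ θ = α`, and `βᵢ ∈ N(y)` exactly when
`uᵢ` is negative, so it suffices that a simple root is neither a sum of two negative roots nor a
sum of two positive roots. Both follow from the vector `ρ = ∑ R⁺` (twice the usual Weyl vector):
a simple reflection `s_γ` permutes `R⁺ ∖ {γ}`, so `s_γ ρ = ρ - 2γ`, whence `⟪γ, ρ⟫ = ⟪γ, γ⟫ > 0`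
and `⟪β, ρ⟫ > 0` for every positive root `β`. This excludes two negative summands. If
`α = β₁ + β₂` with `βᵢ` positive, we may assume `⟪α, β₁⟫ > 0`; then `s_α β₁ = β₁ - cα` is
positive with `c` a positive integer, and `s_α β₁ + β₂ = (1 - c)α` has non-positive pairing
with `ρ`, which is absurd.
-/

namespace RootSystemData

variable {V : Type*} [NormedAddCommGroup V] [InnerProductSpace ℝ V]

lemma eq_zero_or_inner_pos_of_mem_closure {S : Set V} {ρ : V} (hS : ∀ γ ∈ S, 0 < ⟪γ, ρ⟫)
    {v : V} (hv : v ∈ AddSubmonoid.closure S) : v = 0 ∨ 0 < ⟪v, ρ⟫ := by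
  induction hv using AddSubmonoid.closure_induction with
  | mem γ hγ => exact .inr (hS γ hγ)
  | zero => exact .inl rfl
  | add u w _ _ hu hw =>
    rcases hu with rfl | hu
    · rwa [zero_add]
    rcases hw with rfl | hw
    · rw [add_zero]
      exact .inr hu
    exact .inr (by rw [inner_add_left]; positivity)

section

variable (R : RootSystemData V)

lemma mem_pos_or_neg_mem_pos {v : V} (hv : v ∈ R.roots) : v ∈ R.pos ∨ -v ∈ R.pos := by
  rw [R.eq_union] at hv
  rcases hv with hv | ⟨p, hp, rfl⟩
  · exact .inl hv
  · exact .inr (by rwa [neg_neg])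

lemma mem_N_iff {w : V ≃ₗᵢ[ℝ] V} {β : V} (hβ : β ∈ R.pos) :
    β ∈ R.N w ↔ -(w⁻¹ β) ∈ R.pos := by
  refine ⟨?_, fun h => ⟨hβ, -(w⁻¹ β), h, neg_neg _⟩⟩
  rintro ⟨-, p, hp, hpv⟩
  rwa [← hpv, neg_neg]

lemma ne_zero_of_mem_simples {γ : V} (hγ : γ ∈ R.simples) : γ ≠ 0 :=
  R.ne_zero γ (R.pos_sub (R.simples_sub hγ))

noncomputable def posRootSum : V := ∑ᶠ β ∈ R.pos, β

end

lemma srefl_apply (a x : V) : srefl a x = x - (2 * ⟪a, x⟫ / ⟪a, a⟫) • a := by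
  rw [srefl, Submodule.reflection_apply, Submodule.starProjection_orthogonal_val,
    Submodule.starProjection_singleton, real_inner_self_eq_norm_sq]
  simp only [RCLike.ofReal_real_eq_id, id]
  match_scalars <;> ring

lemma srefl_self (a : V) : srefl a a = -a :=
  Submodule.reflection_orthogonalComplement_singleton_eq_neg a

lemma srefl_srefl (a x : V) : srefl a (srefl a x) = x :=
  Submodule.reflection_reflection _ x

lemma srefl_inv (a : V) : (srefl a)⁻¹ = srefl (V := V) a :=
  Submodule.reflection_symm

variable {R : RootSystemData V}

namespace IsGeometric

variable (hR : R.IsGeometric)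
include hR

lemma apply_mem_roots {w : V ≃ₗᵢ[ℝ] V} (hw : w ∈ R.W) {β : V} (hβ : β ∈ R.roots) :
    w β ∈ R.roots := by
  induction hw using Subgroup.closure_induction'' generalizing β with
  | mem _ hg =>
    obtain ⟨γ, hγ, rfl⟩ := hg
    exact hR.refl_stable γ (R.pos_sub (R.simples_sub hγ)) β hβ
  | inv_mem _ hg =>
    obtain ⟨γ, hγ, rfl⟩ := hg
    rw [srefl_inv]
    exact hR.refl_stable γ (R.pos_sub (R.simples_sub hγ)) β hβ
  | one => exact hβ
  | mul _ _ _ _ hg hh => exact hg (hh hβ)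

lemma srefl_mem_pos_diff_singleton {γ : V} (hγ : γ ∈ R.simples) {β : V} (hβ : β ∈ R.pos)
    (hne : β ≠ γ) : srefl γ β ∈ R.pos \ {γ} := by
  refine ⟨hR.simple_perm γ hγ β hβ hne, fun h => ?_⟩
  have hβγ : β = -γ := by
    rw [← srefl_srefl γ β, Set.mem_singleton_iff.mp h, srefl_self]
  exact R.not_both γ (R.simples_sub hγ) (hβγ ▸ hβ)

variable (hfin : R.pos.Finite)
include hfin

lemma srefl_posRootSum {γ : V} (hγ : γ ∈ R.simples) :
    srefl γ R.posRootSum = R.posRootSum - 2 • γ := by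
  classical
  have hγP : γ ∈ hfin.toFinset := hfin.mem_toFinset.mpr (R.simples_sub hγ)
  have hperm : ∑ β ∈ hfin.toFinset.erase γ, srefl γ β = ∑ β ∈ hfin.toFinset.erase γ, β := by
    have hmaps : ∀ β ∈ hfin.toFinset.erase γ, srefl γ β ∈ hfin.toFinset.erase γ := by
      intro β hβ
      obtain ⟨hne, hβP⟩ := Finset.mem_erase.mp hβ
      obtain ⟨hpos, hne'⟩ := hR.srefl_mem_pos_diff_singleton hγ (hfin.mem_toFinset.mp hβP) hne
      exact Finset.mem_erase.mpr ⟨hne', hfin.mem_toFinset.mpr hpos⟩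
    exact Finset.sum_nbij' (srefl γ) (srefl γ) hmaps hmaps (fun β _ => srefl_srefl γ β)
      (fun β _ => srefl_srefl γ β) (fun _ _ => rfl)
  rw [posRootSum, finsum_mem_eq_finite_toFinset_sum _ hfin, map_sum,
    ← Finset.add_sum_erase _ _ hγP, ← Finset.add_sum_erase _ (fun β : V => β) hγP, hperm,
    srefl_self, two_smul]
  abel

lemma inner_posRootSum_of_mem_simples {γ : V} (hγ : γ ∈ R.simples) :
    ⟪γ, R.posRootSum⟫ = ⟪γ, γ⟫ := by
  have h := (srefl γ).inner_map_map γ R.posRootSum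
  rw [srefl_self, hR.srefl_posRootSum hfin hγ, inner_neg_left, inner_sub_right,
    two_smul, inner_add_right] at h
  linarith

lemma inner_posRootSum_pos {β : V} (hβ : β ∈ R.pos) : 0 < ⟪β, R.posRootSum⟫ := by
  have hsimple : ∀ γ ∈ R.simples, 0 < ⟪γ, R.posRootSum⟫ := fun γ hγ => by
    rw [hR.inner_posRootSum_of_mem_simples hfin hγ]
    exact real_inner_self_pos.mpr (R.ne_zero_of_mem_simples hγ)
  exact (eq_zero_or_inner_pos_of_mem_closure hsimple (hR.pos_comb β hβ)).resolve_left
    (R.ne_zero β (R.pos_sub hβ))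

lemma neg_add_neg_ne_of_mem_pos {p₁ p₂ β : V} (hp₁ : p₁ ∈ R.pos) (hp₂ : p₂ ∈ R.pos)
    (hβ : β ∈ R.pos) : -p₁ + -p₂ ≠ β := by
  intro h
  have := congrArg (⟪·, R.posRootSum⟫) h
  simp only [inner_add_left, inner_neg_left] at this
  linarith [hR.inner_posRootSum_pos hfin hp₁, hR.inner_posRootSum_pos hfin hp₂,
    hR.inner_posRootSum_pos hfin hβ]

variable (hcrys : ∀ α ∈ R.roots, ∀ β ∈ R.roots, ∃ n : ℤ, 2 * ⟪α, β⟫ / ⟪α, α⟫ = (n : ℝ))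
include hcrys

lemma add_ne_simple_of_inner_pos {α β₁ β₂ : V} (hα : α ∈ R.simples) (hβ₁ : β₁ ∈ R.pos)
    (hβ₂ : β₂ ∈ R.pos) (hinner : 0 < ⟪α, β₁⟫) : β₁ + β₂ ≠ α := by
  intro hsum
  have hne : β₁ ≠ α := by
    rintro rfl
    exact R.ne_zero β₂ (R.pos_sub hβ₂) (by simpa using hsum)
  have hc1 : 1 ≤ 2 * ⟪α, β₁⟫ / ⟪α, α⟫ := by
    obtain ⟨n, hn⟩ := hcrys α (R.pos_sub (R.simples_sub hα)) β₁ (R.pos_sub hβ₁)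
    have hcpos : 0 < 2 * ⟪α, β₁⟫ / ⟪α, α⟫ :=
      div_pos (by linarith) (real_inner_self_pos.mpr (R.ne_zero_of_mem_simples hα))
    rw [hn] at hcpos ⊢
    exact_mod_cast (show (0 : ℤ) < n by exact_mod_cast hcpos)
  -- `s_α β₁ + β₂ = (1 - c) α` with `c = 2⟪α, β₁⟫ / ⟪α, α⟫ ≥ 1`, yet it is a sum of positive roots.
  have hrefl := hR.inner_posRootSum_pos hfin (hR.simple_perm α hα β₁ hβ₁ hne)
  have hβ₂ρ := hR.inner_posRootSum_pos hfin hβ₂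
  have hαρ := hR.inner_posRootSum_pos hfin (R.simples_sub hα)
  have hsumρ := congrArg (⟪·, R.posRootSum⟫) hsum
  simp only [inner_add_left] at hsumρ
  rw [srefl_apply, inner_sub_left, real_inner_smul_left] at hrefl
  nlinarith

lemma add_ne_simple {α β₁ β₂ : V} (hα : α ∈ R.simples) (hβ₁ : β₁ ∈ R.pos)
    (hβ₂ : β₂ ∈ R.pos) : β₁ + β₂ ≠ α := by
  intro hsum
  have hαα : 0 < ⟪α, β₁⟫ + ⟪α, β₂⟫ := by
    rw [← inner_add_right, hsum]
    exact real_inner_self_pos.mpr (R.ne_zero_of_mem_simples hα)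
  rcases lt_or_ge 0 ⟪α, β₁⟫ with h₁ | h₁
  · exact hR.add_ne_simple_of_inner_pos hfin hcrys hα hβ₁ hβ₂ h₁ hsum
  · exact hR.add_ne_simple_of_inner_pos hfin hcrys hα hβ₂ hβ₁ (by linarith)
      ((add_comm _ _).trans hsum)

lemma xor_neg_mem_pos_of_add_eq_simple {α u₁ u₂ : V} (hα : α ∈ R.simples)
    (hu₁ : u₁ ∈ R.roots) (hu₂ : u₂ ∈ R.roots) (hsum : u₁ + u₂ = α) :
    Xor (-u₁ ∈ R.pos) (-u₂ ∈ R.pos) := by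
  rcases R.mem_pos_or_neg_mem_pos hu₁ with h₁ | h₁ <;>
    rcases R.mem_pos_or_neg_mem_pos hu₂ with h₂ | h₂
  · exact absurd hsum (hR.add_ne_simple hfin hcrys hα h₁ h₂)
  · exact .inr ⟨h₂, R.not_both u₁ h₁⟩
  · exact .inl ⟨h₁, R.not_both u₂ h₂⟩
  · refine absurd ?_ (hR.neg_add_neg_ne_of_mem_pos hfin h₁ h₂ (R.simples_sub hα))
    rwa [neg_neg, neg_neg]

end IsGeometric

end RootSystemData

open RootSystemData
open scoped RealInnerProductSpace

variable {V : Type*} [NormedAddCommGroup V] [InnerProductSpace ℝ V] [FiniteDimensional ℝ V]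

theorem exactly_one_summand_in_inversions_general (R : RootSystemData V) (hR : R.IsGeometric)
    (hfin : R.roots.Finite)
    (hcrys : ∀ α ∈ R.roots, ∀ β ∈ R.roots, ∃ n : ℤ, 2 * ⟪α, β⟫ / ⟪α, α⟫ = (n : ℝ))
    (θ : V)
    (α : V) (hα : α ∈ R.simples)
    (y : V ≃ₗᵢ[ℝ] V) (hy : y ∈ R.W ∧ y α = θ ∧
      ∀ z : V ≃ₗᵢ[ℝ] V, z ∈ R.W → z α = θ → R.length y ≤ R.length z)
    (β₁ β₂ : V) (hβ₁ : β₁ ∈ R.pos) (hβ₂ : β₂ ∈ R.pos) (hsum : β₁ + β₂ = θ) :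
    Xor' (β₁ ∈ R.N y) (β₂ ∈ R.N y) := by
  obtain ⟨hyW, hyα, -⟩ := hy
  have hroot : ∀ β ∈ R.pos, y⁻¹ β ∈ R.roots := fun β hβ =>
    hR.apply_mem_roots (inv_mem hyW) (R.pos_sub hβ)
  have hadd : y⁻¹ β₁ + y⁻¹ β₂ = α := by
    rw [← map_add, hsum, ← hyα]
    exact y.symm_apply_apply α
  rw [R.mem_N_iff hβ₁, R.mem_N_iff hβ₂]
  exact hR.xor_neg_mem_pos_of_add_eq_simple (hfin.subset R.pos_sub) hcrys hα
    (hroot β₁ hβ₁) (hroot β₂ hβ₂) hadd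

/-- if `β₁ + β₂ = θ` with `β₁, β₂ ∈ R⁺`, exactly one of them is in `N(y_α)`. -/
theorem exactly_one_summand_in_inversions (R : RootSystemData V) (hR : R.IsGeometric)
    (hfin : R.roots.Finite)
    (hcrys : ∀ α ∈ R.roots, ∀ β ∈ R.roots, ∃ n : ℤ, 2 * ⟪α, β⟫ / ⟪α, α⟫ = (n : ℝ))
    (hirr : ∀ S₁ S₂ : Set V, R.simples = S₁ ∪ S₂ →
      (∀ a ∈ S₁, ∀ b ∈ S₂, ⟪a, b⟫ = 0) → S₁ = ∅ ∨ S₂ = ∅)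
    (θ : V) (hθpos : θ ∈ R.pos)
    (hθhigh : ∀ α ∈ R.roots, θ - α ∈ AddSubmonoid.closure R.simples)
    (α : V) (hα : α ∈ R.simples) (hlong : ∀ β ∈ R.roots, ‖β‖ ≤ ‖α‖)
    (y : V ≃ₗᵢ[ℝ] V) (hy : y ∈ R.W ∧ y α = θ ∧
      ∀ z : V ≃ₗᵢ[ℝ] V, z ∈ R.W → z α = θ → R.length y ≤ R.length z)
    (β₁ β₂ : V) (hβ₁ : β₁ ∈ R.pos) (hβ₂ : β₂ ∈ R.pos) (hsum : β₁ + β₂ = θ) :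
    Xor' (β₁ ∈ R.N y) (β₂ ∈ R.N y) :=
  exactly_one_summand_in_inversions_general R hR hfin hcrys θ α hα y hy β₁ β₂ hβ₁ hβ₂ hsum
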